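/- Let 1 → N → G → H → 1 be an extension of groups with N perfect, and suppose the induced map M₀(G) → M₀(H) is surjective. Then there is an exact sequence 1 → B₀(H) → B₀(G) → B₀(N) of Bogomolov multipliers. -/

import Mathlib

universe u

open scoped commutatorElement

/-- Two groups acting on each other (and on themselves by conjugation) with
compatible actions, in the sense of Brown–Loday. -/
structure CompatibleActions (G H : Type u) [Group G] [Group H] where
  actG : G →* MulAut H
  actH : H →* MulAut G
  compat_left : ∀ (g g' : G) (h : H),
    actH (actG g h) g' = g * actH h (g⁻¹ * g' * g) * g⁻¹
  compat_right : ∀ (g : G) (h h' : H),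
    actG (actH h g) h' = h * actG g (h⁻¹ * h' * h) * h⁻¹

variable {G H : Type u} [Group G] [Group H]

/-- The defining relators of the non-abelian tensor product `G ⊗ H`. -/
def tensorRels (c : CompatibleActions G H) : Set (FreeGroup (G × H)) :=
  {r | ∃ g g' h, r = FreeGroup.of (g * g', h) *
      (FreeGroup.of (g * g' * g⁻¹, c.actG g h) * FreeGroup.of (g, h))⁻¹} ∪
  {r | ∃ g h h', r = FreeGroup.of (g, h * h') *
      (FreeGroup.of (g, h) * FreeGroup.of (c.actH h g, h * h' * h⁻¹))⁻¹}

/-- The non-abelian tensor product `G ⊗ H` of groups acting compatibly on each other. -/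
def NATensor (c : CompatibleActions G H) : Type u :=
  PresentedGroup (tensorRels c)

instance (c : CompatibleActions G H) : Group (NATensor c) := by
  unfold NATensor; infer_instance

/-- The generator `g ⊗ h` of the non-abelian tensor product. -/
def tmul (c : CompatibleActions G H) (g : G) (h : H) : NATensor c :=
  PresentedGroup.of (g, h)

/-- Conjugation actions of a group on itself form compatible actions. -/
def conjActions (G : Type u) [Group G] : CompatibleActions G G where
  actG := MulAut.conj
  actH := MulAut.conj
  compat_left := by intros; simp only [MulAut.conj_apply]; group
  compat_right := by intros; simp only [MulAut.conj_apply]; group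

/-- The non-abelian tensor square `G ⊗ G`. -/
def TensorSquare (G : Type u) [Group G] : Type u := NATensor (conjActions G)

instance (G : Type u) [Group G] : Group (TensorSquare G) := by
  unfold TensorSquare; infer_instance

/-- The derivative subgroup `D_H(G) = ⟨g ⬝ (ʰg)⁻¹ : g ∈ G, h ∈ H⟩ ≤ G`. -/
def derivSubgroupG (c : CompatibleActions G H) : Subgroup G :=
  Subgroup.closure {x | ∃ (g : G) (h : H), x = g * (c.actH h g)⁻¹}

/-- The derivative subgroup `D_G(H) = ⟨h ⬝ (ᵍh)⁻¹ : g ∈ G, h ∈ H⟩ ≤ H`. -/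
def derivSubgroupH (c : CompatibleActions G H) : Subgroup H :=
  Subgroup.closure {x | ∃ (g : G) (h : H), x = h * (c.actG g h)⁻¹}
/-- The defining relators of the non-abelian exterior square `G ∧ G`. -/
def exteriorRels (G : Type u) [Group G] : Set (FreeGroup (G × G)) :=
  tensorRels (conjActions G) ∪ {r | ∃ g : G, r = FreeGroup.of (g, g)}

/-- The non-abelian exterior square `G ∧ G`. -/
def ExteriorSquare (G : Type u) [Group G] : Type u :=
  PresentedGroup (exteriorRels G)

instance (G : Type u) [Group G] : Group (ExteriorSquare G) := by
  unfold ExteriorSquare; infer_instance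

/-- The generator `x ∧ y` of the non-abelian exterior square. -/
def wedge {G : Type u} [Group G] (x y : G) : ExteriorSquare G :=
  PresentedGroup.of (x, y)

/-- The commutator homomorphism `κ : G ∧ G →* G`, `x ∧ y ↦ [x,y]`. -/
def exteriorComm (G : Type u) [Group G] : ExteriorSquare G →* G :=
  PresentedGroup.toGroup (f := fun p : G × G => ⁅p.1, p.2⁆) (by
    rintro r hr
    simp only [exteriorRels, tensorRels, Set.mem_union, Set.mem_setOf_eq] at hr
    rcases hr with ((⟨g, g', h, rfl⟩ | ⟨g, h, h', rfl⟩) | ⟨g, rfl⟩) <;>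
      simp only [map_mul, map_inv, FreeGroup.lift_apply_of, conjActions, MulAut.conj_apply,
        commutatorElement_def] <;> group)

/-- The Schur multiplier `M(G)`, realised as the kernel of `κ : G ∧ G →* G`. -/
def SchurMultiplier (G : Type u) [Group G] : Subgroup (ExteriorSquare G) :=
  (exteriorComm G).ker

/-- The subgroup `M₀(G) ≤ G ∧ G` generated by the `x ∧ y` with `[x,y] = 1`. -/
def M0 (G : Type u) [Group G] : Subgroup (ExteriorSquare G) :=
  Subgroup.closure {z | ∃ x y : G, ⁅x, y⁆ = 1 ∧ z = wedge x y}
theorem mk_mem_rels_eq_one {α : Type u} (rels : Set (FreeGroup α)) {r : FreeGroup α}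
    (h : r ∈ rels) : PresentedGroup.mk rels r = 1 :=
  (QuotientGroup.eq_one_iff r).mpr (Subgroup.subset_normalClosure h)

theorem wedge_rel₁ {K : Type u} [Group K] (g g' h : K) :
    wedge (g * g') h = wedge (g * g' * g⁻¹) (g * h * g⁻¹) * wedge g h := by
  have := mk_mem_rels_eq_one (exteriorRels K)
    (r := FreeGroup.of (g * g', h) *
      (FreeGroup.of (g * g' * g⁻¹, (conjActions K).actG g h) * FreeGroup.of (g, h))⁻¹)
    (Or.inl (Or.inl ⟨g, g', h, rfl⟩))
  simp only [map_mul, map_inv, conjActions, MulAut.conj_apply] at this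
  rw [mul_inv_eq_one] at this
  exact this

theorem wedge_rel₂ {K : Type u} [Group K] (g h h' : K) :
    wedge g (h * h') = wedge g h * wedge (h * g * h⁻¹) (h * h' * h⁻¹) := by
  have := mk_mem_rels_eq_one (exteriorRels K)
    (r := FreeGroup.of (g, h * h') *
      (FreeGroup.of (g, h) * FreeGroup.of ((conjActions K).actH h g, h * h' * h⁻¹))⁻¹)
    (Or.inl (Or.inr ⟨g, h, h', rfl⟩))
  simp only [map_mul, map_inv, conjActions, MulAut.conj_apply] at this
  rw [mul_inv_eq_one] at this
  exact this

theorem wedge_self {K : Type u} [Group K] (g : K) : wedge g g = 1 :=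
  mk_mem_rels_eq_one (exteriorRels K) (Or.inr ⟨g, rfl⟩)

noncomputable def extMap {K L : Type u} [Group K] [Group L] (φ : K →* L) :
    ExteriorSquare K →* ExteriorSquare L :=
  PresentedGroup.toGroup (f := fun p : K × K => wedge (φ p.1) (φ p.2)) (by
    rintro r hr
    simp only [exteriorRels, tensorRels, Set.mem_union, Set.mem_setOf_eq] at hr
    rcases hr with ((⟨g, g', h, rfl⟩ | ⟨g, h, h', rfl⟩) | ⟨g, rfl⟩) <;>
      simp only [map_mul, map_inv, FreeGroup.lift_apply_of, conjActions, MulAut.conj_apply,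
        mul_inv_eq_one]
    · exact wedge_rel₁ (φ g) (φ g') (φ h)
    · exact wedge_rel₂ (φ g) (φ h) (φ h')
    · exact wedge_self (φ g))

@[simp] theorem extMap_wedge {K L : Type u} [Group K] [Group L] (φ : K →* L) (x y : K) :
    extMap φ (wedge x y) = wedge (φ x) (φ y) :=
  PresentedGroup.toGroup.of _

@[simp] theorem exteriorComm_wedge {K : Type u} [Group K] (x y : K) :
    exteriorComm K (wedge x y) = ⁅x, y⁆ :=
  PresentedGroup.toGroup.of _

theorem exteriorComm_extMap {K L : Type u} [Group K] [Group L] (φ : K →* L)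
    (x : ExteriorSquare K) : exteriorComm L (extMap φ x) = φ (exteriorComm K x) := by
  have h : (exteriorComm L).comp (extMap φ) = φ.comp (exteriorComm K) := by
    apply PresentedGroup.ext
    rintro ⟨a, b⟩
    show exteriorComm L (extMap φ (wedge a b)) = φ (exteriorComm K (wedge a b))
    simp [extMap_wedge, map_commutatorElement]
  exact DFunLike.congr_fun h x

/-- The induced map `M(K) → M(L)` on Schur multipliers. -/
noncomputable def schurMap {K L : Type u} [Group K] [Group L] (φ : K →* L) :
    SchurMultiplier K →* SchurMultiplier L :=
  ((extMap φ).domRestrict (SchurMultiplier K)).codRestrict (SchurMultiplier L) (fun x => by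
    have hx : exteriorComm K (x : ExteriorSquare K) = 1 := x.2
    show extMap φ (x : ExteriorSquare K) ∈ SchurMultiplier L
    simp [SchurMultiplier, MonoidHom.mem_ker, MonoidHom.domRestrict_apply,
      exteriorComm_extMap, hx])

theorem extMap_mem_M0 {K L : Type u} [Group K] [Group L] (φ : K →* L)
    {z : ExteriorSquare K} (hz : z ∈ M0 K) : extMap φ z ∈ M0 L := by
  have h : Subgroup.map (extMap φ) (M0 K) ≤ M0 L := by
    rw [M0, MonoidHom.map_closure]
    apply Subgroup.closure_mono
    rintro _ ⟨w, ⟨x, y, hxy, rfl⟩, rfl⟩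
    exact ⟨φ x, φ y, by rw [← map_commutatorElement, hxy, map_one],
      by simp [extMap_wedge]⟩
  exact h ⟨z, hz, rfl⟩

/-- The Bogomolov multiplier `B₀(K) = Hom(M(K)/M₀(K), ℚ/ℤ)`, realised as the group of
homomorphisms `M(K) → ℚ/ℤ` vanishing on `M₀(K)`. -/
def Bogomolov (K : Type u) [Group K] : Type u :=
  {f : SchurMultiplier K →* Multiplicative (ℚ ⧸ AddSubgroup.zmultiples (1 : ℚ)) //
    ∀ x : SchurMultiplier K, (x : ExteriorSquare K) ∈ M0 K → f x = 1}

/-- The (contravariant) map on Bogomolov multipliers induced by `φ : K →* L`. -/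
noncomputable def bogomolovMap {K L : Type u} [Group K] [Group L] (φ : K →* L) :
    Bogomolov L → Bogomolov K :=
  fun f => ⟨f.1.comp (schurMap φ), fun x hx => by
    have hmem : ((schurMap φ x : SchurMultiplier L) : ExteriorSquare L) ∈ M0 L := by
      have : ((schurMap φ x : SchurMultiplier L) : ExteriorSquare L)
          = extMap φ (x : ExteriorSquare K) := rfl
      rw [this]
      exact extMap_mem_M0 φ hx
    simpa using f.2 (schurMap φ x) hmem⟩

/-! ### Auxiliary machinery -/

section BasicWedge

variable {K : Type u} [Group K]

/-- The set of wedge generators of the exterior square. -/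
def wedgeSet (K : Type u) [Group K] : Set (ExteriorSquare K) :=
  {w | ∃ a b : K, w = wedge a b}

theorem mem_closure_wedgeSet (z : ExteriorSquare K) :
    z ∈ Subgroup.closure (wedgeSet K) := by
  have key : ∀ r : FreeGroup (K × K),
      PresentedGroup.mk (exteriorRels K) r ∈ Subgroup.closure (wedgeSet K) := by
    intro r
    induction r using FreeGroup.induction_on with
    | C1 => rw [map_one]; exact Subgroup.one_mem (Subgroup.closure (wedgeSet K))
    | of x => exact Subgroup.subset_closure ⟨x.1, x.2, rfl⟩
    | inv_of x _ =>
      rw [map_inv]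
      exact Subgroup.inv_mem _ (Subgroup.subset_closure ⟨x.1, x.2, rfl⟩)
    | mul x y hx hy =>
      rw [map_mul]
      exact Subgroup.mul_mem _ hx hy
  exact PresentedGroup.induction_on z key

theorem closure_wedgeSet_eq_top : Subgroup.closure (wedgeSet K) = ⊤ :=
  Subgroup.eq_top_iff' _ |>.mpr fun z => mem_closure_wedgeSet z

/-- The diagonal conjugation action on the exterior square. -/
noncomputable def sigmaE (c : K) : ExteriorSquare K →* ExteriorSquare K :=
  extMap (MulAut.conj c).toMonoidHom

@[simp] theorem sigmaE_wedge (c a b : K) :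
    sigmaE c (wedge a b) = wedge (c * a * c⁻¹) (c * b * c⁻¹) := by
  simp [sigmaE, extMap_wedge, MulAut.conj_apply]

theorem sigmaE_sigmaE (c d : K) (z : ExteriorSquare K) :
    sigmaE c (sigmaE d z) = sigmaE (c * d) z := by
  have h : (sigmaE c).comp (sigmaE d) = sigmaE (c * d) := by
    apply PresentedGroup.ext
    rintro ⟨a, b⟩
    show sigmaE c (sigmaE d (wedge a b)) = sigmaE (c * d) (wedge a b)
    simp only [sigmaE_wedge]
    congr 1 <;> group
  exact DFunLike.congr_fun h z

theorem sigmaE_one_apply (z : ExteriorSquare K) : sigmaE (1 : K) z = z := by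
  have h : sigmaE (1 : K) = MonoidHom.id (ExteriorSquare K) := by
    apply PresentedGroup.ext
    rintro ⟨a, b⟩
    show sigmaE (1 : K) (wedge a b) = wedge a b
    simp
  rw [h]; rfl

theorem wedge_one_left (h : K) : wedge (1 : K) h = 1 := by
  have h1 := wedge_rel₁ (1 : K) 1 h
  simp only [one_mul, mul_one, inv_one] at h1
  exact left_eq_mul.mp h1

theorem wedge_one_right (g : K) : wedge g (1 : K) = 1 := by
  have h1 := wedge_rel₂ g (1 : K) 1
  simp only [one_mul, mul_one, inv_one] at h1
  exact left_eq_mul.mp h1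

theorem wedge_inv_left (g h : K) : wedge g⁻¹ h = (sigmaE g⁻¹ (wedge g h))⁻¹ := by
  have h0 := wedge_rel₁ g g⁻¹ (g⁻¹ * h * g)
  have e : wedge (g * g⁻¹) (g⁻¹ * h * g) = 1 := by
    rw [show g * g⁻¹ = (1 : K) from by group]; exact wedge_one_left _
  rw [show g * g⁻¹ * g⁻¹ = g⁻¹ from by group,
    show g * (g⁻¹ * h * g) * g⁻¹ = h from by group] at h0
  rw [e] at h0
  have h2 : wedge g⁻¹ h = (wedge g (g⁻¹ * h * g))⁻¹ :=
    eq_inv_of_mul_eq_one_left h0.symm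
  rw [h2, sigmaE_wedge]
  congr 2 <;> group

theorem wedge_inv_right (g h : K) : wedge g h⁻¹ = (sigmaE h⁻¹ (wedge g h))⁻¹ := by
  have h0 := wedge_rel₂ (h⁻¹ * g * h) h h⁻¹
  have e : wedge (h⁻¹ * g * h) (h * h⁻¹) = 1 := by
    rw [show h * h⁻¹ = (1 : K) from by group]; exact wedge_one_right _
  rw [show h * (h⁻¹ * g * h) * h⁻¹ = g from by group,
    show h * h⁻¹ * h⁻¹ = h⁻¹ from by group] at h0
  rw [e] at h0
  have h2 : wedge g h⁻¹ = (wedge (h⁻¹ * g * h) h)⁻¹ :=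
    eq_inv_of_mul_eq_one_right h0.symm
  rw [h2, sigmaE_wedge]
  congr 2 <;> group

end BasicWedge

section ConjWedge

variable {K : Type u} [Group K]

theorem wedge_swap_aux (g h : K) :
    wedge (g * h * g⁻¹) g * wedge g (g * h * g⁻¹) = 1 := by
  have s2 := wedge_rel₁ g h g
  rw [show g * g * g⁻¹ = g from by group, wedge_self, mul_one] at s2
  have s3 := wedge_rel₁ g (g * h * g⁻¹) (g * h * g⁻¹)
  rw [wedge_self, one_mul] at s3
  rw [show g * (g * h * g⁻¹) = g * (g * h) * g⁻¹ from by group] at s3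
  calc wedge (g * h * g⁻¹) g * wedge g (g * h * g⁻¹)
      = wedge (g * h) g * wedge (g * (g * h) * g⁻¹) (g * h * g⁻¹) := by rw [← s2, ← s3]
    _ = wedge (g * h) (g * h) := (wedge_rel₂ (g * h) g h).symm
    _ = 1 := wedge_self _

theorem wedge_swap (a b : K) : wedge a b * wedge b a = 1 := by
  have h1 := wedge_swap_aux b (b⁻¹ * a * b)
  rw [show b * (b⁻¹ * a * b) * b⁻¹ = a from by group] at h1
  exact h1

theorem wedge_swap' (a b : K) : wedge b a = (wedge a b)⁻¹ :=
  eq_inv_of_mul_eq_one_right (wedge_swap a b)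

end ConjWedge

section KeyExchange

variable {K : Type u} [Group K]

theorem key_exchange (g h a b : K) :
    sigmaE (g * h) (wedge a b) * wedge g h = wedge g h * sigmaE (h * g) (wedge a b) := by
  have h1 := wedge_rel₁ g a (h * b)
  rw [show g * (h * b) * g⁻¹ = g * h * g⁻¹ * (g * b * g⁻¹) from by group] at h1
  rw [wedge_rel₂ (g * a * g⁻¹) (g * h * g⁻¹) (g * b * g⁻¹)] at h1
  rw [wedge_rel₂ g h b] at h1
  have h4 := wedge_rel₂ (g * a) h b
  rw [wedge_rel₁ g a h] at h4
  rw [show h * (g * a) * h⁻¹ = h * g * h⁻¹ * (h * a * h⁻¹) from by group] at h4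
  rw [wedge_rel₁ (h * g * h⁻¹) (h * a * h⁻¹) (h * b * h⁻¹)] at h4
  have heq := h1.symm.trans h4
  simp only [mul_assoc] at heq
  have heq2 := mul_left_cancel heq
  simp only [← mul_assoc] at heq2
  have heq3 := mul_right_cancel heq2
  rw [sigmaE_wedge, sigmaE_wedge]
  rw [show g * h * a * (g * h)⁻¹ = g * h * g⁻¹ * g * a * g⁻¹ * (g * h * g⁻¹)⁻¹ from by group,
    show g * h * b * (g * h)⁻¹ = g * h * g⁻¹ * g * b * g⁻¹ * (g * h * g⁻¹)⁻¹ from by group,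
    show h * g * a * (h * g)⁻¹ = h * g * h⁻¹ * h * a * h⁻¹ * (h * g * h⁻¹)⁻¹ from by group,
    show h * g * b * (h * g)⁻¹ = h * g * h⁻¹ * h * b * h⁻¹ * (h * g * h⁻¹)⁻¹ from by group]
  exact heq3

theorem conj_wedge (g h c d : K) :
    wedge g h * wedge c d * (wedge g h)⁻¹ = sigmaE (g * h * g⁻¹ * h⁻¹) (wedge c d) := by
  have k := key_exchange g h ((h * g)⁻¹ * c * (h * g)) ((h * g)⁻¹ * d * (h * g))
  rw [sigmaE_wedge, sigmaE_wedge] at k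
  rw [show h * g * ((h * g)⁻¹ * c * (h * g)) * (h * g)⁻¹ = c from by group,
    show h * g * ((h * g)⁻¹ * d * (h * g)) * (h * g)⁻¹ = d from by group,
    show g * h * ((h * g)⁻¹ * c * (h * g)) * (g * h)⁻¹
      = g * h * g⁻¹ * h⁻¹ * c * (g * h * g⁻¹ * h⁻¹)⁻¹ from by group,
    show g * h * ((h * g)⁻¹ * d * (h * g)) * (g * h)⁻¹
      = g * h * g⁻¹ * h⁻¹ * d * (g * h * g⁻¹ * h⁻¹)⁻¹ from by group] at k
  rw [sigmaE_wedge, ← k]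
  exact mul_inv_cancel_right _ _

theorem conj_eq_sigmaE (g h : K) (z : ExteriorSquare K) :
    wedge g h * z * (wedge g h)⁻¹ = sigmaE (g * h * g⁻¹ * h⁻¹) z := by
  have hh : (MulAut.conj (wedge g h)).toMonoidHom = sigmaE (g * h * g⁻¹ * h⁻¹) := by
    apply PresentedGroup.ext
    rintro ⟨c, d⟩
    show wedge g h * wedge c d * (wedge g h)⁻¹ = sigmaE (g * h * g⁻¹ * h⁻¹) (wedge c d)
    exact conj_wedge g h c d
  have := DFunLike.congr_fun hh z
  simpa [MulAut.conj_apply] using this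

theorem conj_eq_sigmaE' (g h : K) (z : ExteriorSquare K) :
    (wedge g h)⁻¹ * z * wedge g h = sigmaE ((g * h * g⁻¹ * h⁻¹)⁻¹) z := by
  have h1 := conj_eq_sigmaE g h ((wedge g h)⁻¹ * z * wedge g h)
  rw [show wedge g h * ((wedge g h)⁻¹ * z * wedge g h) * (wedge g h)⁻¹ = z from by group] at h1
  have := congrArg (sigmaE ((g * h * g⁻¹ * h⁻¹)⁻¹)) h1
  rw [sigmaE_sigmaE, inv_mul_cancel, sigmaE_one_apply] at this
  exact this.symm

end KeyExchange

section WedgeCommutator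

variable {K : Type u} [Group K]

theorem wedge_commutator (x y g : K) :
    wedge ⁅x, y⁆ g = wedge x y * (sigmaE g (wedge x y))⁻¹ := by
  -- Step A : expansion of `wedge g [x,y]`
  have a3 : wedge g (x⁻¹ * y⁻¹)
      = (sigmaE x⁻¹ (wedge g x))⁻¹ * sigmaE x⁻¹ ((sigmaE y⁻¹ (wedge g y))⁻¹) := by
    rw [wedge_rel₂ g x⁻¹ y⁻¹, ← sigmaE_wedge x⁻¹ g y⁻¹, wedge_inv_right g x,
      wedge_inv_right g y]
  have a2 : wedge g (y * (x⁻¹ * y⁻¹))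
      = wedge g y * sigmaE y (wedge g (x⁻¹ * y⁻¹)) := by
    rw [wedge_rel₂ g y (x⁻¹ * y⁻¹), ← sigmaE_wedge y g (x⁻¹ * y⁻¹)]
  have a1 : wedge g (x * (y * (x⁻¹ * y⁻¹)))
      = wedge g x * sigmaE x (wedge g (y * (x⁻¹ * y⁻¹))) := by
    rw [wedge_rel₂ g x (y * (x⁻¹ * y⁻¹)), ← sigmaE_wedge x g (y * (x⁻¹ * y⁻¹))]
  have hA : wedge g (x * (y * (x⁻¹ * y⁻¹)))
      = wedge g x * (sigmaE x (wedge g y) *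
        ((sigmaE (x * y * x⁻¹) (wedge g x))⁻¹ *
          (sigmaE (x * y * x⁻¹ * y⁻¹) (wedge g y))⁻¹)) := by
    rw [a1, a2, a3]
    simp only [map_mul, map_inv, sigmaE_sigmaE]
    rw [show x * y * x⁻¹ * y⁻¹ = x * (y * (x⁻¹ * y⁻¹)) from by group,
      show x * y * x⁻¹ = x * (y * x⁻¹) from by group]
  -- Step B : second expansion pieces
  have b5 : wedge (g * x * g⁻¹) y
      = (sigmaE (g * x * g⁻¹) (wedge g y))⁻¹ * (sigmaE g (wedge x y) * wedge g y) := by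
    have b5a := wedge_rel₁ (g * x) g⁻¹ y
    rw [← sigmaE_wedge (g * x) g⁻¹ y, wedge_inv_left g y, map_inv, sigmaE_sigmaE,
      wedge_rel₁ g x y, ← sigmaE_wedge g x y] at b5a
    exact b5a
  have hB : wedge (x * g) (y * g) = wedge x g * (sigmaE g (wedge x y) * wedge g y) := by
    have b1 := wedge_rel₂ (x * g) g (g⁻¹ * y * g)
    rw [show g * (g⁻¹ * y * g) = y * g from by group] at b1
    have b2 := wedge_rel₁ x g g
    rw [wedge_self, one_mul] at b2
    rw [b2] at b1
    rw [show g * (x * g) * g⁻¹ = g * x * g⁻¹ * g from by group,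
      show y * g * g⁻¹ = y from by group] at b1
    rw [wedge_rel₁ (g * x * g⁻¹) g y, ← sigmaE_wedge (g * x * g⁻¹) g y, b5] at b1
    rw [b1]; group
  have hB1 : wedge (x * g) (y * g)
      = sigmaE x (wedge g y) * (wedge x y * sigmaE y (wedge x g)) := by
    have c1 := wedge_rel₁ x g (y * g)
    have c2 := wedge_rel₂ g y g
    rw [wedge_self, mul_one] at c2
    rw [show x * (y * g) * x⁻¹ = x * (y * g) * x⁻¹ from rfl] at c1
    rw [wedge_rel₂ x y g, ← sigmaE_wedge y x g] at c1
    rw [← sigmaE_wedge x g (y * g), c2] at c1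
    rw [c1]
  -- Step C : the exchange relation
  have hC : sigmaE x (wedge g y) * (wedge x y * (sigmaE y (wedge g x))⁻¹)
      = (wedge g x)⁻¹ * (sigmaE g (wedge x y) * wedge g y) := by
    have h0 := hB1.symm.trans hB
    rw [wedge_swap' g x, map_inv] at h0
    exact h0
  -- Step D : commutator conjugation identities
  have hSM1 : wedge x y * (sigmaE y (wedge g x))⁻¹
      = (sigmaE (x * y * x⁻¹) (wedge g x))⁻¹ * wedge x y := by
    have h0 := conj_eq_sigmaE x y ((sigmaE y (wedge g x))⁻¹)
    rw [map_inv, sigmaE_sigmaE,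
      show x * y * x⁻¹ * y⁻¹ * y = x * y * x⁻¹ from by group] at h0
    rw [← h0]; group
  have hSM2 : (sigmaE (x * y * x⁻¹ * y⁻¹) (wedge g y))⁻¹
      = wedge x y * ((wedge g y)⁻¹ * (wedge x y)⁻¹) := by
    have h0 := conj_eq_sigmaE x y ((wedge g y)⁻¹)
    rw [map_inv] at h0
    rw [← h0]; group
  rw [hSM1] at hC
  -- Final assembly
  have key : wedge g x * (sigmaE x (wedge g y) * ((sigmaE (x * y * x⁻¹) (wedge g x))⁻¹ *
        (wedge x y * ((wedge g y)⁻¹ * (wedge x y)⁻¹))))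
      = sigmaE g (wedge x y) * (wedge x y)⁻¹ := by
    calc wedge g x * (sigmaE x (wedge g y) * ((sigmaE (x * y * x⁻¹) (wedge g x))⁻¹ *
          (wedge x y * ((wedge g y)⁻¹ * (wedge x y)⁻¹))))
        = wedge g x * ((sigmaE x (wedge g y) * ((sigmaE (x * y * x⁻¹) (wedge g x))⁻¹ *
            wedge x y)) * ((wedge g y)⁻¹ * (wedge x y)⁻¹)) := by group
      _ = wedge g x * (((wedge g x)⁻¹ * (sigmaE g (wedge x y) * wedge g y)) *
            ((wedge g y)⁻¹ * (wedge x y)⁻¹)) := by rw [hC]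
      _ = sigmaE g (wedge x y) * (wedge x y)⁻¹ := by group
  rw [commutatorElement_def, wedge_swap' g (x * y * x⁻¹ * y⁻¹),
    show x * y * x⁻¹ * y⁻¹ = x * (y * (x⁻¹ * y⁻¹)) from by group, hA, hSM2, key]
  group

end WedgeCommutator
section SubgroupMachinery

variable {K : Type u} [Group K]

theorem sigmaE_mem_closure {s : Set (ExteriorSquare K)}
    (hs : ∀ c : K, ∀ w ∈ s, sigmaE c w ∈ Subgroup.closure s) (c : K) :
    ∀ z ∈ Subgroup.closure s, sigmaE c z ∈ Subgroup.closure s := by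
  intro z hz
  induction hz using Subgroup.closure_induction with
  | mem w hw => exact hs c w hw
  | one => simpa using Subgroup.one_mem _
  | mul u v _ _ hu hv => rw [map_mul]; exact Subgroup.mul_mem _ hu hv
  | inv u _ hu => rw [map_inv]; exact Subgroup.inv_mem _ hu

theorem normal_of_sigmaE (P : Subgroup (ExteriorSquare K))
    (hP : ∀ c : K, ∀ p ∈ P, sigmaE c p ∈ P) : P.Normal := by
  have main : ∀ t : ExteriorSquare K, ∀ p ∈ P, t * p * t⁻¹ ∈ P ∧ t⁻¹ * p * t ∈ P := by
    let C : Subgroup (ExteriorSquare K) :=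
      { carrier := {t | ∀ p ∈ P, t * p * t⁻¹ ∈ P ∧ t⁻¹ * p * t ∈ P}
        one_mem' := by intro p hp; constructor <;> simpa using hp
        mul_mem' := by
          intro t₁ t₂ h₁ h₂ p hp
          constructor
          · have := (h₁ (t₂ * p * t₂⁻¹) (h₂ p hp).1).1
            rw [show t₁ * (t₂ * p * t₂⁻¹) * t₁⁻¹ = t₁ * t₂ * p * (t₁ * t₂)⁻¹ from by group]
              at this
            exact this
          · have := (h₂ (t₁⁻¹ * p * t₁) (h₁ p hp).2).2
            rw [show t₂⁻¹ * (t₁⁻¹ * p * t₁) * t₂ = (t₁ * t₂)⁻¹ * p * (t₁ * t₂) from by group]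
              at this
            exact this
        inv_mem' := by
          intro t ht p hp
          refine ⟨?_, ?_⟩
          · simpa using (ht p hp).2
          · simpa using (ht p hp).1 }
    intro t
    have ht : t ∈ C := by
      have : Subgroup.closure (wedgeSet K) ≤ C := by
        rw [Subgroup.closure_le]
        rintro w ⟨a, b, rfl⟩
        intro p hp
        constructor
        · rw [conj_eq_sigmaE]; exact hP _ p hp
        · rw [conj_eq_sigmaE']; exact hP _ p hp
      exact this (mem_closure_wedgeSet t)
    exact ht
  exact ⟨fun p hp t => by
    have := (main t p hp).1
    simpa [mul_assoc] using this⟩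

theorem M0_le_schur : M0 K ≤ SchurMultiplier K := by
  rw [M0, Subgroup.closure_le]
  rintro z ⟨a, b, hab, rfl⟩
  simp [SchurMultiplier, MonoidHom.mem_ker, hab]

theorem sigmaE_mem_M0 (c : K) {z : ExteriorSquare K} (hz : z ∈ M0 K) :
    sigmaE c z ∈ M0 K := by
  refine sigmaE_mem_closure (s := {z | ∃ x y : K, ⁅x, y⁆ = 1 ∧ z = wedge x y}) ?_ c z hz
  rintro d w ⟨a, b, hab, rfl⟩
  apply Subgroup.subset_closure
  refine ⟨d * a * d⁻¹, d * b * d⁻¹, ?_, by rw [sigmaE_wedge]⟩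
  have : ⁅d * a * d⁻¹, d * b * d⁻¹⁆ = d * ⁅a, b⁆ * d⁻¹ := by
    simp only [commutatorElement_def]; group
  rw [this, hab]; group

instance M0_normal : (M0 K).Normal := normal_of_sigmaE _ fun c _ hp => sigmaE_mem_M0 c hp

end SubgroupMachinery

section Extension

variable {G : Type u} [Group G]

/-- The image of `N ∧ N` inside `G ∧ G`, as a closure. -/
def RNsub (N : Subgroup G) : Subgroup (ExteriorSquare G) :=
  Subgroup.closure {w | ∃ a b : G, a ∈ N ∧ b ∈ N ∧ w = wedge a b}

/-- The image of `N ∧ G` inside `G ∧ G`, as a closure. -/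
def Jsub (N : Subgroup G) : Subgroup (ExteriorSquare G) :=
  Subgroup.closure {w | ∃ n g : G, n ∈ N ∧ (w = wedge n g ∨ w = wedge g n)}

variable (N : Subgroup G) [N.Normal]

theorem RNsub_sigmaE (c : G) : ∀ z ∈ RNsub N, sigmaE c z ∈ RNsub N := by
  refine sigmaE_mem_closure ?_ c
  rintro d w ⟨a, b, ha, hb, rfl⟩
  rw [sigmaE_wedge]
  exact Subgroup.subset_closure
    ⟨d * a * d⁻¹, d * b * d⁻¹, Subgroup.Normal.conj_mem ‹N.Normal› a ha d,
      Subgroup.Normal.conj_mem ‹N.Normal› b hb d, rfl⟩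

theorem Jsub_sigmaE (c : G) : ∀ z ∈ Jsub N, sigmaE c z ∈ Jsub N := by
  refine sigmaE_mem_closure ?_ c
  rintro d w ⟨n, g, hn, h | h⟩ <;> subst h <;> rw [sigmaE_wedge] <;>
    apply Subgroup.subset_closure
  · exact ⟨d * n * d⁻¹, d * g * d⁻¹, Subgroup.Normal.conj_mem ‹N.Normal› n hn d, Or.inl rfl⟩
  · exact ⟨d * n * d⁻¹, d * g * d⁻¹, Subgroup.Normal.conj_mem ‹N.Normal› n hn d, Or.inr rfl⟩

instance : (Jsub N).Normal := normal_of_sigmaE _ (Jsub_sigmaE N)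
instance : (RNsub N).Normal := normal_of_sigmaE _ (RNsub_sigmaE N)

theorem RNsub_le_ker : ∀ z ∈ RNsub N, extMap (QuotientGroup.mk' N) z = 1 := by
  have : RNsub N ≤ (extMap (QuotientGroup.mk' N)).ker := by
    rw [RNsub, Subgroup.closure_le]
    rintro w ⟨a, b, ha, hb, rfl⟩
    rw [SetLike.mem_coe, MonoidHom.mem_ker, extMap_wedge]
    rw [show QuotientGroup.mk' N a = 1 from (QuotientGroup.eq_one_iff a).mpr ha,
      show QuotientGroup.mk' N b = 1 from (QuotientGroup.eq_one_iff b).mpr hb]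
    exact wedge_one_left _
  exact fun z hz => this hz

theorem RNsub_le_range : ∀ z ∈ RNsub N, ∃ t : ExteriorSquare ↥N, extMap N.subtype t = z := by
  have : RNsub N ≤ (extMap N.subtype).range := by
    rw [RNsub, Subgroup.closure_le]
    rintro w ⟨a, b, ha, hb, rfl⟩
    exact ⟨wedge (⟨a, ha⟩ : ↥N) (⟨b, hb⟩ : ↥N), by rw [extMap_wedge]; rfl⟩
  exact fun z hz => this hz

theorem extMap_mk'_surjective :
    Function.Surjective (extMap (QuotientGroup.mk' N)) := by
  intro z
  have : z ∈ Subgroup.closure (wedgeSet (G ⧸ N)) := mem_closure_wedgeSet z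
  have hle : Subgroup.closure (wedgeSet (G ⧸ N)) ≤ (extMap (QuotientGroup.mk' N)).range := by
    rw [Subgroup.closure_le]
    rintro w ⟨a, b, rfl⟩
    obtain ⟨a', rfl⟩ := QuotientGroup.mk'_surjective N a
    obtain ⟨b', rfl⟩ := QuotientGroup.mk'_surjective N b
    exact ⟨wedge a' b', by rw [extMap_wedge]⟩
  exact hle this

/-- Lifting elements of a perfect normal subgroup to `RNsub`. -/
theorem perfect_lift (hperf : commutator ↥N = ⊤) :
    ∀ n ∈ N, ∃ z ∈ RNsub N, exteriorComm G z = n := by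
  intro n hn
  have hmem : (⟨n, hn⟩ : ↥N) ∈ Subgroup.closure (commutatorSet ↥N) := by
    rw [← commutator_eq_closure, hperf]; trivial
  have key : ∀ m : ↥N, m ∈ Subgroup.closure (commutatorSet ↥N) →
      ∃ z ∈ RNsub N, exteriorComm G z = (m : G) := by
    intro m hm
    induction hm using Subgroup.closure_induction with
    | mem w hw =>
      obtain ⟨p, q, rfl⟩ := hw
      refine ⟨wedge (p : G) (q : G),
        Subgroup.subset_closure ⟨p, q, p.2, q.2, rfl⟩, ?_⟩
      rw [exteriorComm_wedge]; rfl
    | one => exact ⟨1, Subgroup.one_mem _, by simp⟩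
    | mul u v _ _ hu hv =>
      obtain ⟨zu, hzu, hcu⟩ := hu
      obtain ⟨zv, hzv, hcv⟩ := hv
      exact ⟨zu * zv, Subgroup.mul_mem _ hzu hzv, by rw [map_mul, hcu, hcv]; rfl⟩
    | inv u _ hu =>
      obtain ⟨zu, hzu, hcu⟩ := hu
      exact ⟨zu⁻¹, Subgroup.inv_mem _ hzu, by rw [map_inv, hcu]; rfl⟩
  exact key _ hmem

end Extension

section KerJ

variable {G : Type u} [Group G] (N : Subgroup G) [N.Normal]

theorem wb_congr (a₁ b₁ a₂ b₂ : G)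
    (ha : QuotientGroup.mk' N a₁ = QuotientGroup.mk' N a₂)
    (hb : QuotientGroup.mk' N b₁ = QuotientGroup.mk' N b₂) :
    QuotientGroup.mk' (Jsub N) (wedge a₁ b₁) = QuotientGroup.mk' (Jsub N) (wedge a₂ b₂) := by
  obtain ⟨n, hn, rfl⟩ := (QuotientGroup.mk'_eq_mk' N).mp ha
  obtain ⟨m, hm, rfl⟩ := (QuotientGroup.mk'_eq_mk' N).mp hb
  have s1 : QuotientGroup.mk' (Jsub N) (wedge (a₁ * n) (b₁ * m))
      = QuotientGroup.mk' (Jsub N) (wedge a₁ (b₁ * m)) := by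
    rw [wedge_rel₁ a₁ n (b₁ * m), map_mul,
      show QuotientGroup.mk' (Jsub N) (wedge (a₁ * n * a₁⁻¹) (a₁ * (b₁ * m) * a₁⁻¹)) = 1 from
        (QuotientGroup.eq_one_iff _).mpr (Subgroup.subset_closure
          ⟨a₁ * n * a₁⁻¹, a₁ * (b₁ * m) * a₁⁻¹,
            Subgroup.Normal.conj_mem ‹N.Normal› n hn a₁, Or.inl rfl⟩), one_mul]
  have s2 : QuotientGroup.mk' (Jsub N) (wedge a₁ (b₁ * m))
      = QuotientGroup.mk' (Jsub N) (wedge a₁ b₁) := by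
    rw [wedge_rel₂ a₁ b₁ m, map_mul,
      show QuotientGroup.mk' (Jsub N) (wedge (b₁ * a₁ * b₁⁻¹) (b₁ * m * b₁⁻¹)) = 1 from
        (QuotientGroup.eq_one_iff _).mpr (Subgroup.subset_closure
          ⟨b₁ * m * b₁⁻¹, b₁ * a₁ * b₁⁻¹,
            Subgroup.Normal.conj_mem ‹N.Normal› m hm b₁, Or.inr rfl⟩), mul_one]
  exact (s1.trans s2).symm

noncomputable def secN : G ⧸ N → G := Function.surjInv (QuotientGroup.mk'_surjective N)

theorem secN_spec (x : G ⧸ N) : QuotientGroup.mk' N (secN N x) = x :=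
  Function.surjInv_eq (QuotientGroup.mk'_surjective N) x

theorem ker_le_Jsub : ∀ z : ExteriorSquare G,
    extMap (QuotientGroup.mk' N) z = 1 → z ∈ Jsub N := by
  set π := QuotientGroup.mk' N with hπ
  set mkJ := QuotientGroup.mk' (Jsub N) with hmkJ
  have relcheck : ∀ r ∈ exteriorRels (G ⧸ N),
      FreeGroup.lift (fun p : (G ⧸ N) × (G ⧸ N) => mkJ (wedge (secN N p.1) (secN N p.2))) r
        = 1 := by
    rintro r ((⟨x, x', yy, rfl⟩ | ⟨x, yy, yy', rfl⟩) | ⟨x, rfl⟩) <;>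
      simp only [map_mul, map_inv, FreeGroup.lift_apply_of, conjActions, MulAut.conj_apply,
        mul_inv_eq_one, mul_inv_rev]
    · -- relator 1
      have e1 : mkJ (wedge (secN N (x * x')) (secN N yy))
          = mkJ (wedge (secN N x * secN N x') (secN N yy)) := by
        apply wb_congr
        · rw [secN_spec, map_mul, secN_spec, secN_spec]
        · rfl
      have e2 : mkJ (wedge (secN N (x * x' * x⁻¹)) (secN N (x * yy * x⁻¹)))
          = mkJ (wedge (secN N x * secN N x' * (secN N x)⁻¹)
              (secN N x * secN N yy * (secN N x)⁻¹)) := by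
        apply wb_congr <;>
          simp only [secN_spec, map_mul, map_inv, secN_spec]
      rw [e1, e2, wedge_rel₁ (secN N x) (secN N x') (secN N yy), map_mul]
      group
    · -- relator 2
      have e1 : mkJ (wedge (secN N x) (secN N (yy * yy')))
          = mkJ (wedge (secN N x) (secN N yy * secN N yy')) := by
        apply wb_congr
        · rfl
        · rw [secN_spec, map_mul, secN_spec, secN_spec]
      have e2 : mkJ (wedge (secN N (yy * x * yy⁻¹)) (secN N (yy * yy' * yy⁻¹)))
          = mkJ (wedge (secN N yy * secN N x * (secN N yy)⁻¹)
              (secN N yy * secN N yy' * (secN N yy)⁻¹)) := by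
        apply wb_congr <;>
          simp only [secN_spec, map_mul, map_inv, secN_spec]
      rw [e1, e2, wedge_rel₂ (secN N x) (secN N yy) (secN N yy'), map_mul]
      group
    · -- relator 3
      show mkJ (wedge (secN N x) (secN N x)) = 1
      rw [wedge_self]
      exact map_one _
  let ψ : ExteriorSquare (G ⧸ N) →* (ExteriorSquare G ⧸ Jsub N) :=
    PresentedGroup.toGroup relcheck
  have hcomp : ψ.comp (extMap π) = mkJ := by
    apply PresentedGroup.ext
    rintro ⟨a, b⟩
    show ψ (extMap π (wedge a b)) = mkJ (wedge a b)
    rw [extMap_wedge]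
    show ψ (wedge (π a) (π b)) = mkJ (wedge a b)
    have : ψ (wedge (π a) (π b)) = mkJ (wedge (secN N (π a)) (secN N (π b))) :=
      PresentedGroup.toGroup.of relcheck
    rw [this]
    exact wb_congr N _ _ _ _ (by rw [secN_spec]) (by rw [secN_spec])
  intro z hz
  have : mkJ z = ψ (extMap π z) := (DFunLike.congr_fun hcomp z).symm
  rw [hz, map_one] at this
  exact (QuotientGroup.eq_one_iff z).mp this

end KerJ

section JleS

open scoped Pointwise

variable {G : Type u} [Group G] (N : Subgroup G) [N.Normal]

theorem Jsub_le_sup (hperf : commutator ↥N = ⊤) :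
    Jsub N ≤ RNsub N ⊔ M0 G := by
  set S : Subgroup (ExteriorSquare G) := RNsub N ⊔ M0 G with hS
  have hSclos : S = Subgroup.closure ((RNsub N : Set (ExteriorSquare G)) ∪ (M0 G)) := by
    rw [Subgroup.closure_union, Subgroup.closure_eq, Subgroup.closure_eq]
  have hSsigma : ∀ c : G, ∀ z ∈ S, sigmaE c z ∈ S := by
    intro c z hz
    rw [hSclos] at hz ⊢
    refine sigmaE_mem_closure ?_ c z hz
    rintro d w (hw | hw)
    · exact Subgroup.subset_closure (Or.inl (RNsub_sigmaE N d w hw))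
    · exact Subgroup.subset_closure (Or.inr (sigmaE_mem_M0 d hw))
  -- the subgroup of elements `a` with all mixed wedges in `S`
  let T : Subgroup G :=
    { carrier := {a | ∀ g : G, wedge a g ∈ S ∧ wedge g a ∈ S}
      one_mem' := by
        intro g
        rw [wedge_one_left, wedge_one_right]
        exact ⟨Subgroup.one_mem _, Subgroup.one_mem _⟩
      mul_mem' := by
        intro a b ha hb g
        constructor
        · rw [wedge_rel₁ a b g, ← sigmaE_wedge a b g]
          exact Subgroup.mul_mem _ (hSsigma a _ (hb g).1) (ha g).1
        · rw [wedge_rel₂ g a b, ← sigmaE_wedge a g b]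
          exact Subgroup.mul_mem _ (ha g).2 (hSsigma a _ (hb g).2)
      inv_mem' := by
        intro a ha g
        constructor
        · rw [wedge_inv_left a g]
          exact Subgroup.inv_mem _ (hSsigma a⁻¹ _ (ha g).1)
        · rw [wedge_inv_right g a]
          exact Subgroup.inv_mem _ (hSsigma a⁻¹ _ (ha g).2) }
  have hNT : ∀ n ∈ N, n ∈ T := by
    intro n hn
    have hmem : (⟨n, hn⟩ : ↥N) ∈ Subgroup.closure (commutatorSet ↥N) := by
      rw [← commutator_eq_closure, hperf]; trivial
    have key : ∀ m : ↥N, m ∈ Subgroup.closure (commutatorSet ↥N) → (m : G) ∈ T := by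
      intro m hm
      induction hm using Subgroup.closure_induction with
      | mem w hw =>
        obtain ⟨p, q, rfl⟩ := hw
        have hco : ((⁅p, q⁆ : ↥N) : G) = ⁅(p : G), (q : G)⁆ := rfl
        rw [hco]
        intro g
        have h1 : wedge ⁅(p : G), (q : G)⁆ g ∈ S := by
          rw [wedge_commutator]
          refine Subgroup.mul_mem _ ?_ (Subgroup.inv_mem _ ?_)
          · exact Subgroup.mem_sup_left (Subgroup.subset_closure ⟨p, q, p.2, q.2, rfl⟩)
          · rw [sigmaE_wedge]
            exact Subgroup.mem_sup_left (Subgroup.subset_closure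
              ⟨g * p * g⁻¹, g * q * g⁻¹, Subgroup.Normal.conj_mem ‹N.Normal› _ p.2 g,
                Subgroup.Normal.conj_mem ‹N.Normal› _ q.2 g, rfl⟩)
        refine ⟨h1, ?_⟩
        rw [wedge_swap' ⁅(p : G), (q : G)⁆ g]
        exact Subgroup.inv_mem _ h1
      | one => exact T.one_mem
      | mul u v _ _ hu hv => exact T.mul_mem hu hv
      | inv u _ hu =>
        have := T.inv_mem hu
        simpa using this
    exact key _ hmem
  rw [Jsub, Subgroup.closure_le]
  rintro w ⟨n, g, hn, h | h⟩ <;> subst h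
  · exact (hNT n hn g).1
  · exact (hNT n hn g).2

theorem ker_decomp (hperf : commutator ↥N = ⊤) (z : ExteriorSquare G)
    (hz : extMap (QuotientGroup.mk' N) z = 1) :
    ∃ r ∈ RNsub N, ∃ m ∈ M0 G, z = r * m := by
  have h1 : z ∈ Jsub N := ker_le_Jsub N z hz
  have h2 : z ∈ RNsub N ⊔ M0 G := Jsub_le_sup N hperf h1
  have h3 : z ∈ (RNsub N : Set (ExteriorSquare G)) * (M0 G : Set (ExteriorSquare G)) := by
    rw [← Subgroup.mul_normal (RNsub N) (M0 G)]
    exact h2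
  obtain ⟨r, hr, m, hm, hmul⟩ := h3
  exact ⟨r, hr, m, hm, hmul.symm⟩

end JleS

/-- for an extension `1 → N → G → H → 1` with `N` perfect such that the
induced map `M₀(G) → M₀(H)` is surjective, the induced sequence
`1 → B₀(H) → B₀(G) → B₀(N)` of Bogomolov multipliers is exact: `B₀(H) → B₀(G)` is
injective and its image is exactly the kernel of `B₀(G) → B₀(N)`. -/
theorem bogomolov_exact_of_perfect_kernel {G : Type u} [Group G] (N : Subgroup G)
    [N.Normal] (hperf : commutator N = ⊤)
    (hM0 : ∀ y ∈ M0 (G ⧸ N), ∃ x ∈ M0 G, extMap (QuotientGroup.mk' N) x = y) :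
    Function.Injective
      (bogomolovMap (QuotientGroup.mk' N) : Bogomolov (G ⧸ N) → Bogomolov G) ∧
    (∀ f : Bogomolov G,
      (bogomolovMap N.subtype f).1 = 1 ↔
        ∃ e : Bogomolov (G ⧸ N), bogomolovMap (QuotientGroup.mk' N) e = f) := by
  classical
  set π := QuotientGroup.mk' N with hπdef
  set ι := N.subtype with hιdef
  -- surjectivity of the induced map on Schur multipliers
  have schur_surj : ∀ x : SchurMultiplier (G ⧸ N), ∃ w : SchurMultiplier G,
      schurMap π w = x := by
    intro x
    obtain ⟨z, hz⟩ := extMap_mk'_surjective N (x : ExteriorSquare (G ⧸ N))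
    have hk : π (exteriorComm G z) = 1 := by
      have h1 := exteriorComm_extMap π z
      rw [hz] at h1
      have hx : exteriorComm (G ⧸ N) (x : ExteriorSquare (G ⧸ N)) = 1 := x.2
      rw [hx] at h1
      exact h1.symm
    have hkN : exteriorComm G z ∈ N := (QuotientGroup.eq_one_iff _).mp hk
    obtain ⟨z', hz'RN, hz'c⟩ := perfect_lift N hperf _ hkN
    refine ⟨⟨z'⁻¹ * z, ?_⟩, ?_⟩
    · rw [SchurMultiplier, MonoidHom.mem_ker, map_mul, map_inv, hz'c]
      group
    · apply Subtype.ext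
      show extMap π (z'⁻¹ * z) = (x : ExteriorSquare (G ⧸ N))
      rw [map_mul, map_inv, RNsub_le_ker N z' hz'RN, hz]
      simp
  constructor
  · -- injectivity
    intro f₁ f₂ hf
    apply Subtype.ext
    apply MonoidHom.ext
    intro x
    obtain ⟨w, rfl⟩ := schur_surj x
    have h1 : f₁.1.comp (schurMap π) = f₂.1.comp (schurMap π) := congrArg Subtype.val hf
    exact DFunLike.congr_fun h1 w
  · intro f
    constructor
    · intro hf
      have hf' : f.1.comp (schurMap ι) = 1 := hf
      -- vanishing on the kernel
      have hvan : ∀ w : SchurMultiplier G, extMap π (w : ExteriorSquare G) = 1 →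
          f.1 w = 1 := by
        intro w hw
        obtain ⟨r, hr, m, hm, hrm⟩ := ker_decomp N hperf _ hw
        have hmk : exteriorComm G m = 1 := M0_le_schur hm
        have hrk : exteriorComm G r = 1 := by
          have h2 : exteriorComm G (w : ExteriorSquare G) = 1 := w.2
          rw [hrm, map_mul, hmk, mul_one] at h2
          exact h2
        obtain ⟨t, ht⟩ := RNsub_le_range N r hr
        have htk' : t ∈ SchurMultiplier ↥N := by
          rw [SchurMultiplier, MonoidHom.mem_ker]
          have h3 := exteriorComm_extMap ι t
          rw [ht, hrk] at h3
          have h3' : ι (exteriorComm ↥N t) = ι 1 := by rw [map_one]; exact h3.symm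
          exact N.subtype_injective h3'
        have hw_eq : w = (schurMap ι ⟨t, htk'⟩) * ⟨m, M0_le_schur hm⟩ := by
          apply Subtype.ext
          show (w : ExteriorSquare G) = extMap ι t * m
          rw [ht, hrm]
        rw [hw_eq, map_mul]
        have h4 : f.1 (schurMap ι ⟨t, htk'⟩) = 1 := by
          have := DFunLike.congr_fun hf' (⟨t, htk'⟩ : SchurMultiplier ↥N)
          simpa using this
        have h5 : f.1 ⟨m, M0_le_schur hm⟩ = 1 := f.2 _ hm
        rw [h4, h5, mul_one]
      choose lift hlift using schur_surj
      have hker_lift : ∀ (x : SchurMultiplier (G ⧸ N)) (w : SchurMultiplier G),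
          schurMap π w = x → f.1 (lift x) = f.1 w := by
        intro x w hw
        have hd : extMap π ((lift x * w⁻¹ : SchurMultiplier G) : ExteriorSquare G) = 1 := by
          have h6 : schurMap π (lift x * w⁻¹) = 1 := by
            rw [map_mul, map_inv, hlift, hw, mul_inv_cancel]
          have := congrArg Subtype.val h6
          exact this
        have h7 := hvan _ hd
        calc f.1 (lift x) = f.1 ((lift x * w⁻¹) * w) := by rw [inv_mul_cancel_right]
          _ = f.1 (lift x * w⁻¹) * f.1 w := map_mul _ _ _
          _ = f.1 w := by rw [h7, one_mul]
      refine ⟨⟨MonoidHom.mk' (fun x => f.1 (lift x)) ?_, ?_⟩, ?_⟩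
      · -- multiplicativity
        intro x y
        have h8 : schurMap π (lift x * lift y) = x * y := by
          rw [map_mul, hlift, hlift]
        calc f.1 (lift (x * y)) = f.1 (lift x * lift y) := hker_lift _ _ h8
          _ = f.1 (lift x) * f.1 (lift y) := map_mul _ _ _
      · -- vanishing on M₀ of the quotient
        intro x hx
        obtain ⟨w0, hw0M, hw0⟩ := hM0 (x : ExteriorSquare (G ⧸ N)) hx
        have hw0S : schurMap π ⟨w0, M0_le_schur hw0M⟩ = x := by
          apply Subtype.ext
          exact hw0
        show f.1 (lift x) = 1
        rw [hker_lift x ⟨w0, M0_le_schur hw0M⟩ hw0S]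
        exact f.2 _ hw0M
      · -- compatibility
        apply Subtype.ext
        apply MonoidHom.ext
        intro w
        show f.1 (lift (schurMap π w)) = f.1 w
        exact hker_lift _ _ rfl
    · rintro ⟨e, rfl⟩
      apply MonoidHom.ext
      intro t
      show e.1 (schurMap π (schurMap ι t)) = 1
      have hz : extMap π (extMap ι ((t : ExteriorSquare ↥N))) = 1 := by
        have hcomp : (extMap π).comp (extMap ι) = 1 := by
          apply PresentedGroup.ext
          rintro ⟨p, q⟩
          show extMap π (extMap ι (wedge (p : ↥N) q)) = (1 : ExteriorSquare ↥N →* ExteriorSquare (G ⧸ N)) (PresentedGroup.of (p, q))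
          rw [extMap_wedge, extMap_wedge,
            show π (ι p) = 1 from (QuotientGroup.eq_one_iff _).mpr p.2,
            show π (ι q) = 1 from (QuotientGroup.eq_one_iff _).mpr q.2, wedge_one_left]
          rfl
        have := DFunLike.congr_fun hcomp (t : ExteriorSquare ↥N)
        simpa using this
      have h9 : schurMap π (schurMap ι t) = 1 := by
        apply Subtype.ext
        exact hz
      rw [h9, map_one]
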